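/- arXiv:2009.04146 — 2 statements merged into one kernel-verified Lean document; each statement's English description precedes it below -/
import Mathlib

section
/- The integral of φ₁ over ℝ² equals 1, and the integral of φ₂ over ℝ² equals (1/π²)(−γ − log π + Ci(π) + i Si(π))(−γ − log π + Ci(π) − i Si(π)), where γ is the Euler–Mascheroni constant and Ci, Si are the cosine and sine integrals. -/
open MeasureTheory

noncomputable def tConv (F G : ℝ × ℝ → ℂ) : ℝ × ℝ → ℂ :=
  fun p => ∫ q : ℝ × ℝ, F (p.1 - q.1, p.2 - q.2) * G q *
    Complex.exp (Real.pi * Complex.I * ((q.1 : ℂ) * p.2 - (q.2 : ℂ) * p.1))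

noncomputable def phi1 : ℝ × ℝ → ℂ :=
  fun p => if p.1 ∈ Set.Ico (0:ℝ) 1 ∧ p.2 ∈ Set.Ico (0:ℝ) 1 then 1 else 0

noncomputable def phiN : ℕ → (ℝ × ℝ → ℂ)
  | 0 => 0
  | 1 => phi1
  | (n+2) => tConv (phiN (n+1)) phi1

/-- The sine integral Si(π). -/
noncomputable def SiPi : ℝ := ∫ t in (0:ℝ)..Real.pi, Real.sin t / t

/-- The cosine integral Ci(π), via Ci(x) = γ + log x + ∫₀ˣ (cos t − 1)/t dt. -/
noncomputable def CiPi : ℝ :=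
  Real.eulerMascheroniConstant + Real.log Real.pi +
    ∫ t in (0:ℝ)..Real.pi, (Real.cos t - 1) / t

/-!
Substituting `p = q + r` in the twisted convolution turns its phase into `π i (q₁ r₂ - q₂ r₁)`,
so `∫ φ₂` factors as `A · conj A` with `A = ∫₀¹ ∫₀¹ e^{π i x y} dy dx`. Integrating in `y` and
rescaling `t = π x` gives
`A = π⁻¹ ∫₀^π (e^{it} - 1) / (it) dt = π⁻¹ (Si π - i ∫₀^π (cos t - 1) / t dt)`,
and the last integral is `Ci π - γ - log π`.
-/

open Complex Real
open scoped Interval ComplexConjugate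

lemma norm_exp_I_mul_sub_one_div_le_one (t : ℝ) :
    ‖(exp (I * t) - 1) / (I * t)‖ ≤ 1 := by
  rw [norm_div, norm_mul, norm_I, one_mul, norm_real]
  exact div_le_one_of_le₀ Real.norm_exp_I_mul_ofReal_sub_one_le (norm_nonneg _)

lemma exp_I_mul_sub_one_div (t : ℝ) :
    (exp (I * t) - 1) / (I * t) = ((Real.sin t / t : ℝ) : ℂ) - ((Real.cos t - 1) / t : ℝ) * I := by
  rcases eq_or_ne t 0 with rfl | ht
  · simp
  · have ht' : (t : ℂ) ≠ 0 := ofReal_ne_zero.2 ht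
    rw [div_eq_iff (mul_ne_zero I_ne_zero ht'), mul_comm I, exp_mul_I]
    push_cast
    field_simp
    ring_nf
    rw [I_sq]
    ring

lemma intervalIntegrable_exp_I_mul_sub_one_div (a b : ℝ) :
    IntervalIntegrable (fun t : ℝ => (exp (I * t) - 1) / (I * t)) volume a b :=
  (intervalIntegrable_const (c := (1 : ℝ))).mono_fun'
    (by fun_prop : Measurable fun t : ℝ => (exp (I * t) - 1) / (I * t)).aestronglyMeasurable
    (.of_forall norm_exp_I_mul_sub_one_div_le_one)

lemma integral_exp_I_mul_sub_one_div (a : ℝ) :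
    ∫ t in (0:ℝ)..a, (exp (I * t) - 1) / (I * t) =
      ((∫ t in (0:ℝ)..a, Real.sin t / t : ℝ) : ℂ) -
        ((∫ t in (0:ℝ)..a, (Real.cos t - 1) / t : ℝ) : ℂ) * I := by
  have hf := intervalIntegrable_exp_I_mul_sub_one_div 0 a
  apply Complex.ext
  · rw [← RCLike.re_to_complex, ← intervalIntegral.intervalIntegral_re hf]
    simp [exp_I_mul_sub_one_div, sin_ofReal_re]
  · rw [← RCLike.im_to_complex, ← intervalIntegral.intervalIntegral_im hf]
    simp [exp_I_mul_sub_one_div, cos_ofReal_re, intervalIntegral.integral_neg]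

lemma integral_integral_exp_mul_mul (a : ℝ) (ha : a ≠ 0) :
    ∫ x in (0:ℝ)..1, ∫ y in (0:ℝ)..1, exp (a * I * (x * y)) =
      (a : ℂ)⁻¹ * ∫ t in (0:ℝ)..a, (exp (I * t) - 1) / (I * t) := by
  have inner : ∀ᵐ x : ℝ, x ∈ Ι (0:ℝ) 1 →
      ∫ y in (0:ℝ)..1, exp (a * I * (x * y)) = (exp (I * ↑(a * x)) - 1) / (I * ↑(a * x)) := by
    refine .of_forall fun x hx => ?_
    have hc : I * ↑(a * x) ≠ 0 := mul_ne_zero I_ne_zero (ofReal_ne_zero.2 (mul_ne_zero ha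
      (Set.uIoc_of_le (zero_le_one (α := ℝ)) ▸ hx).1.ne'))
    have hphase : ∀ y : ℝ, (a : ℂ) * I * (x * y) = I * ↑(a * x) * y := fun y => by push_cast; ring
    simp only [hphase, integral_exp_mul_complex hc]
    simp
  rw [intervalIntegral.integral_congr_ae inner,
    intervalIntegral.integral_comp_mul_left (fun t : ℝ => (exp (I * t) - 1) / (I * t)) ha]
  simp

noncomputable def chi : ℝ → ℂ := (Set.Ico (0:ℝ) 1).indicator 1

lemma integral_chi_mul (f : ℝ → ℂ) : ∫ x, chi x * f x = ∫ x in (0:ℝ)..1, f x := by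
  have : (fun x => chi x * f x) = (Set.Ico (0:ℝ) 1).indicator f := by
    ext x; by_cases hx : x ∈ Set.Ico (0:ℝ) 1 <;> simp [chi, hx]
  rw [this, integral_indicator measurableSet_Ico, integral_Ico_eq_integral_Ioo,
    ← integral_Ioc_eq_integral_Ioo, intervalIntegral.integral_of_le zero_le_one]

lemma conj_chi (x : ℝ) : conj (chi x) = chi x := by
  by_cases hx : x ∈ Set.Ico (0:ℝ) 1 <;> simp [chi, hx]

lemma integrable_chi : Integrable chi :=
  (integrable_indicator_iff measurableSet_Ico).2 (integrableOn_const (by simp))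

lemma phi1_apply (p : ℝ × ℝ) : phi1 p = chi p.1 * chi p.2 := by
  by_cases h1 : p.1 ∈ Set.Ico (0:ℝ) 1 <;> by_cases h2 : p.2 ∈ Set.Ico (0:ℝ) 1 <;>
    simp [phi1, chi, h1, h2]

lemma integral_phi1 : ∫ p, phi1 p = 1 := by
  simp_rw [phi1_apply, Measure.volume_eq_prod, integral_prod_mul]
  have h : ∫ x, chi x = 1 := by simpa using integral_chi_mul 1
  rw [h, one_mul]

lemma integrable_phi1 : Integrable phi1 := by
  rw [funext phi1_apply, Measure.volume_eq_prod]
  exact integrable_chi.mul_prod integrable_chi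

lemma integral_tConv {F G : ℝ × ℝ → ℂ} (hF : Integrable F) (hG : Integrable G) :
    ∫ p, tConv F G p =
      ∫ q : ℝ × ℝ, ∫ r : ℝ × ℝ, F r * G q * exp (π * I * ((q.1 : ℂ) * r.2 - (q.2 : ℂ) * r.1)) := by
  have hintegrable : Integrable (Function.uncurry fun p q : ℝ × ℝ => F (p - q) * G q *
      exp (π * I * ((q.1 : ℂ) * p.2 - (q.2 : ℂ) * p.1))) (volume.prod volume) := by
    refine ((hG.convolution_integrand (ContinuousLinearMap.mul ℂ ℂ) hF).mul_bdd (c := 1)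
      (g := fun x : (ℝ × ℝ) × (ℝ × ℝ) => exp (π * I * ((x.2.1 : ℂ) * x.1.2 - (x.2.2 : ℂ) * x.1.1)))
      (by fun_prop) (.of_forall fun x => le_of_eq ?_)).congr (.of_forall fun x => ?_)
    · rw [show (π : ℂ) * I * ((x.2.1 : ℂ) * x.1.2 - (x.2.2 : ℂ) * x.1.1) =
          ↑(π * (x.2.1 * x.1.2 - x.2.2 * x.1.1)) * I by push_cast; ring]
      exact norm_exp_ofReal_mul_I _
    · simp only [Function.uncurry, ContinuousLinearMap.mul_apply']; ring
  refine (integral_integral_swap hintegrable).trans (integral_congr_ae (.of_forall fun q => ?_))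
  dsimp only
  rw [← integral_add_right_eq_self _ q]
  congr 1; ext r
  simp only [add_sub_cancel_right, Prod.fst_add, Prod.snd_add]
  congr 2; push_cast; ring

lemma integral_phi1_mul_phi1_mul_exp (q : ℝ × ℝ) :
    ∫ r : ℝ × ℝ, phi1 r * phi1 q * exp (π * I * ((q.1 : ℂ) * r.2 - (q.2 : ℂ) * r.1)) =
      (chi q.1 * ∫ y, chi y * exp (π * I * (q.1 * y))) *
        conj (chi q.2 * ∫ y, chi y * exp (π * I * (q.2 * y))) := by
  have hconj : ∀ x : ℝ,
      chi x * exp (-(π * I * (q.2 * x))) = conj (chi x * exp (π * I * (q.2 * x))) := fun x => by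
    simp [conj_chi, ← exp_conj]
  have hsplit : ∀ r : ℝ × ℝ, phi1 r * phi1 q * exp (π * I * ((q.1 : ℂ) * r.2 - (q.2 : ℂ) * r.1)) =
      chi q.1 * chi q.2 *
        ((chi r.1 * exp (-(π * I * (q.2 * r.1)))) * (chi r.2 * exp (π * I * (q.1 * r.2)))) :=
    fun r => by
      rw [phi1_apply, phi1_apply, show (π : ℂ) * I * ((q.1 : ℂ) * r.2 - (q.2 : ℂ) * r.1) =
        -(π * I * (q.2 * r.1)) + π * I * (q.1 * r.2) by ring, Complex.exp_add]
      ring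
  simp_rw [hsplit, integral_const_mul, Measure.volume_eq_prod]
  rw [integral_prod_mul (fun x => chi x * exp (-(π * I * (q.2 * x))))
    (fun y => chi y * exp (π * I * (q.1 * y)))]
  simp_rw [hconj, integral_conj, map_mul, conj_chi]
  ring

lemma integral_tConv_phi1_phi1 :
    ∫ p, tConv phi1 phi1 p =
      ((π : ℂ)⁻¹ * (SiPi - (∫ t in (0:ℝ)..π, (Real.cos t - 1) / t : ℝ) * I)) *
        conj ((π : ℂ)⁻¹ * (SiPi - (∫ t in (0:ℝ)..π, (Real.cos t - 1) / t : ℝ) * I)) := by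
  have hdouble : ∫ x, chi x * ∫ y, chi y * exp (π * I * (x * y)) =
      (π : ℂ)⁻¹ * (SiPi - (∫ t in (0:ℝ)..π, (Real.cos t - 1) / t : ℝ) * I) := by
    simp_rw [integral_chi_mul]
    rw [integral_integral_exp_mul_mul π pi_ne_zero, integral_exp_I_mul_sub_one_div, SiPi]
  simp_rw [integral_tConv integrable_phi1 integrable_phi1, integral_phi1_mul_phi1_mul_exp,
    Measure.volume_eq_prod]
  rw [integral_prod_mul (fun x => chi x * ∫ y, chi y * exp (π * I * (x * y)))
    (fun x => conj (chi x * ∫ y, chi y * exp (π * I * (x * y)))), integral_conj, hdouble]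

theorem integral_phi1_phi2 :
    (∫ p : ℝ × ℝ, phiN 1 p) = 1 ∧
    (∫ p : ℝ × ℝ, phiN 2 p) =
      (1 / (Real.pi : ℂ) ^ 2) *
        (((-Real.eulerMascheroniConstant - Real.log Real.pi + CiPi : ℝ) : ℂ) +
          Complex.I * (SiPi : ℝ)) *
        (((-Real.eulerMascheroniConstant - Real.log Real.pi + CiPi : ℝ) : ℂ) -
          Complex.I * (SiPi : ℝ)) := by
  refine ⟨integral_phi1, ?_⟩
  have hCi : -eulerMascheroniConstant - Real.log π + CiPi =
      ∫ t in (0:ℝ)..π, (Real.cos t - 1) / t := by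
    rw [CiPi]; ring
  rw [show phiN 2 = tConv phi1 phi1 from rfl, integral_tConv_phi1_phi1, hCi]
  simp only [map_mul, map_sub, map_inv₀, conj_ofReal, conj_I]
  linear_combination
    ((π : ℂ)⁻¹ ^ 2 * (SiPi ^ 2 - (∫ t in (0:ℝ)..π, (Real.cos t - 1) / t : ℝ) ^ 2)) * I_sq
end

section
/- The system of twisted translates {T^t_{(k,l)} φ₂ : k, l ∈ ℤ} is a Riesz sequence in L²(ℝ²), i.e., there exist constants A, B > 0 such that A‖c‖² ≤ ‖Σ c_{k,l} T^t_{(k,l)} φ₂‖² ≤ B‖c‖² for all finite sequences c ∈ ℓ²(ℤ²). -/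
open MeasureTheory

noncomputable def tT (k l : ℤ) (φ : ℝ × ℝ → ℂ) : ℝ × ℝ → ℂ :=
  fun p => Complex.exp (Real.pi * Complex.I * ((l : ℂ) * p.1 - (k : ℂ) * p.2)) *
    φ (p.1 - k, p.2 - l)

/-!
With `χ = 1_{[0,1)}` and `F(x, y) = ∫ χ(x - u) χ(u) e^{πiuy} du`, the twisted convolution splits as
`φ₂(x, y) = F(x, y) · conj (F(y, x))`, and `|F(x, y)|` is at most the tent `max (1 - |x - 1|) 0`.
Hence `φ₂` is supported in `[0, 2)²`, bounded by `1`, and at most `1/100` within `1/100` of the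
boundary of that square; comparing `F` with `∫₀¹ e^{πiu} du = 2i/π` gives `|φ₂| ≥ 1/4` within
`1/100` of the centre `(1, 1)`. Only moduli matter, since `|T_{(k,l)} φ| = |φ(· - (k, l))|`.

Each point lies in at most four translated squares, so Cauchy–Schwarz gives the upper bound. On the
small square around `m + (1, 1)` (a ball for the sup metric of `ℝ × ℝ`) the `m`-th translate
dominates, and only its eight neighbours can interfere, each by at most `1/100`; integrating over
these disjoint squares gives the lower bound.
-/

open Set Metric Complex Real
open scoped ComplexConjugate

section WeightedSums

variable {ι κ : Type*}

lemma sq_sum_mul_le_of_sum_le {s : Finset ι} {x w : ι → ℝ} {N : ℝ} (hw : ∀ i ∈ s, 0 ≤ w i)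
    (hN : ∑ i ∈ s, w i ≤ N) : (∑ i ∈ s, x i * w i) ^ 2 ≤ N * ∑ i ∈ s, x i ^ 2 * w i := by
  have hxw : 0 ≤ ∑ i ∈ s, x i ^ 2 * w i :=
    Finset.sum_nonneg fun i hi => mul_nonneg (sq_nonneg _) (hw i hi)
  calc (∑ i ∈ s, x i * w i) ^ 2 ≤ (∑ i ∈ s, w i) * ∑ i ∈ s, x i ^ 2 * w i :=
        s.sum_sq_le_sum_mul_sum_of_sq_le_mul hw (fun i hi => mul_nonneg (sq_nonneg _) (hw i hi))
          fun i _ => le_of_eq (by ring)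
    _ ≤ N * ∑ i ∈ s, x i ^ 2 * w i := mul_le_mul_of_nonneg_right hN hxw

lemma sum_boole_mem_le_card [DecidableEq κ] (s : Finset ι) (t : Finset κ) {f : ι → κ}
    (hf : InjOn f s) : (∑ i ∈ s, if f i ∈ t then (1 : ℝ) else 0) ≤ t.card := by
  rw [Finset.sum_boole]
  exact_mod_cast Finset.card_le_card_of_injOn f (fun i hi => (Finset.mem_filter.1 hi).2)
    (hf.mono fun i hi => (Finset.mem_filter.1 hi).1)

lemma sum_boole_const_sub_mem_le_card [AddGroup κ] [DecidableEq κ] (s t : Finset κ) (m : κ) :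
    (∑ p ∈ s, if m - p ∈ t then (1 : ℝ) else 0) ≤ t.card :=
  sum_boole_mem_le_card s t fun _ _ _ _ h => sub_right_injective h

lemma sum_boole_sub_const_mem_le_card [AddGroup κ] [DecidableEq κ] (s t : Finset κ) (p : κ) :
    (∑ m ∈ s, if m - p ∈ t then (1 : ℝ) else 0) ≤ t.card :=
  sum_boole_mem_le_card s t fun _ _ _ _ h => sub_left_injective h

end WeightedSums

lemma half_sq_sub_sq_le_sq {x y n : ℝ} (hx : 0 ≤ x) (hn : 0 ≤ n) (h : x - y ≤ n) :
    x ^ 2 / 2 - y ^ 2 ≤ n ^ 2 := by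
  rcases le_total y 0 with hy | hy
  · nlinarith
  rcases le_total x y with hxy | hxy
  · nlinarith
  · nlinarith [mul_self_le_mul_self (sub_nonneg.2 hxy) h, sq_nonneg (x - 2 * y)]

lemma mem_ball_iff_abs_sub_lt {z c : ℝ × ℝ} {δ : ℝ} :
    z ∈ ball c δ ↔ |z.1 - c.1| < δ ∧ |z.2 - c.2| < δ := by
  simp [Metric.mem_ball, Prod.dist_eq, Real.dist_eq]

lemma sum_setIntegral_le_integral {X ι : Type*} [MeasurableSpace X] {μ : Measure X}
    {f : X → ℝ} {S : ι → Set X} (s : Finset ι) (hS : ∀ i, MeasurableSet (S i))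
    (hdisj : (s : Set ι).Pairwise (Function.onFun Disjoint S)) (hf : Integrable f μ) (hf0 : 0 ≤ f) :
    ∑ i ∈ s, ∫ x in S i, f x ∂μ ≤ ∫ x, f x ∂μ := by
  rw [← integral_biUnion_finset s (fun i _ => hS i) hdisj fun i _ => hf.integrableOn]
  exact setIntegral_le_integral hf (Filter.Eventually.of_forall hf0)

def latticePoint (p : ℤ × ℤ) : ℝ × ℝ := (p.1, p.2)

lemma latticePoint_sub (p q : ℤ × ℤ) : latticePoint (p - q) = latticePoint p - latticePoint q := by
  ext <;> simp [latticePoint]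

lemma norm_tT (p : ℤ × ℤ) (φ : ℝ × ℝ → ℂ) (z : ℝ × ℝ) :
    ‖tT p.1 p.2 φ z‖ = ‖φ (z - latticePoint p)‖ := by
  rw [tT, norm_mul, show (π : ℂ) * I * ((p.2 : ℂ) * z.1 - (p.1 : ℂ) * z.2) =
    ((π * (p.2 * z.1 - p.1 * z.2) : ℝ) : ℂ) * I by push_cast; ring,
    norm_exp_ofReal_mul_I, one_mul]
  rfl

def supportSquare : Set (ℝ × ℝ) := Ico 0 2 ×ˢ Ico 0 2

lemma measurableSet_supportSquare : MeasurableSet supportSquare :=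
  measurableSet_Ico.prod measurableSet_Ico

lemma integral_indicator_supportSquare_sub (p : ℤ × ℤ) :
    ∫ z, supportSquare.indicator (1 : ℝ × ℝ → ℝ) (z - latticePoint p) = 4 := by
  rw [integral_sub_right_eq_self (fun z => supportSquare.indicator 1 z),
    integral_indicator_one measurableSet_supportSquare, supportSquare,
    Measure.volume_eq_prod, measureReal_prod_prod, Real.volume_real_Ico]
  norm_num

lemma integrable_indicator_supportSquare_sub (p : ℤ × ℤ) :
    Integrable fun z => supportSquare.indicator (1 : ℝ × ℝ → ℝ) (z - latticePoint p) := by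
  refine Integrable.comp_sub_right ?_ _
  refine (integrable_indicator_iff measurableSet_supportSquare).2 (integrableOn_const ?_)
  rw [supportSquare, Measure.volume_eq_prod, Measure.prod_prod]
  exact ENNReal.mul_ne_top measure_Ico_lt_top.ne measure_Ico_lt_top.ne

lemma floor_sub_mem_Icc_of_sub_mem_Ico {t : ℝ} {k : ℤ} (h : t - k ∈ Ico (0 : ℝ) 2) :
    ⌊t⌋ - k ∈ Finset.Icc (0 : ℤ) 1 := by
  rw [← Int.floor_sub_intCast, Finset.mem_Icc]
  exact ⟨Int.floor_nonneg.2 h.1, Int.lt_add_one_iff.1 (Int.floor_lt.2 (by exact_mod_cast h.2))⟩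

lemma sum_indicator_supportSquare_sub_le (s : Finset (ℤ × ℤ)) (z : ℝ × ℝ) :
    ∑ p ∈ s, supportSquare.indicator (1 : ℝ × ℝ → ℝ) (z - latticePoint p) ≤ 4 := by
  have hle : ∀ p ∈ s, supportSquare.indicator (1 : ℝ × ℝ → ℝ) (z - latticePoint p) ≤
      if (⌊z.1⌋, ⌊z.2⌋) - p ∈ Finset.Icc (0 : ℤ) 1 ×ˢ Finset.Icc (0 : ℤ) 1 then 1 else 0 := by
    intro p _
    by_cases hz : z - latticePoint p ∈ supportSquare
    · rw [indicator_of_mem hz, if_pos (Finset.mem_product.2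
        ⟨floor_sub_mem_Icc_of_sub_mem_Ico hz.1, floor_sub_mem_Icc_of_sub_mem_Ico hz.2⟩)]
      rfl
    · rw [indicator_of_notMem hz]
      split_ifs <;> norm_num
  exact (Finset.sum_le_sum hle).trans (sum_boole_const_sub_mem_le_card s _ _)

section UpperRieszBound

variable {φ : ℝ × ℝ → ℂ}

lemma norm_sum_tT_sq_le (hφ : ∀ w, ‖φ w‖ ≤ supportSquare.indicator 1 w) (s : Finset (ℤ × ℤ))
    (c : ℤ × ℤ → ℂ) (z : ℝ × ℝ) :
    ‖∑ p ∈ s, c p * tT p.1 p.2 φ z‖ ^ 2 ≤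
      4 * ∑ p ∈ s, ‖c p‖ ^ 2 * supportSquare.indicator 1 (z - latticePoint p) := by
  have hw : ∀ p ∈ s, 0 ≤ supportSquare.indicator (1 : ℝ × ℝ → ℝ) (z - latticePoint p) :=
    fun p _ => indicator_nonneg (fun _ _ => zero_le_one) _
  have htriangle : ‖∑ p ∈ s, c p * tT p.1 p.2 φ z‖ ≤
      ∑ p ∈ s, ‖c p‖ * supportSquare.indicator 1 (z - latticePoint p) := by
    refine (norm_sum_le _ _).trans (Finset.sum_le_sum fun p _ => ?_)
    rw [norm_mul, norm_tT]
    exact mul_le_mul_of_nonneg_left (hφ _) (norm_nonneg _)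
  exact (pow_le_pow_left₀ (norm_nonneg _) htriangle 2).trans
    (sq_sum_mul_le_of_sum_le hw (sum_indicator_supportSquare_sub_le s z))

lemma integral_norm_sum_tT_sq_le (hφ : ∀ w, ‖φ w‖ ≤ supportSquare.indicator 1 w)
    (s : Finset (ℤ × ℤ)) (c : ℤ × ℤ → ℂ) :
    ∫ z, ‖∑ p ∈ s, c p * tT p.1 p.2 φ z‖ ^ 2 ≤ 16 * ∑ p ∈ s, ‖c p‖ ^ 2 := by
  have hint : ∀ p ∈ s, Integrable fun z =>
      ‖c p‖ ^ 2 * supportSquare.indicator (1 : ℝ × ℝ → ℝ) (z - latticePoint p) :=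
    fun p _ => (integrable_indicator_supportSquare_sub p).const_mul _
  calc ∫ z, ‖∑ p ∈ s, c p * tT p.1 p.2 φ z‖ ^ 2
      ≤ ∫ z, 4 * ∑ p ∈ s, ‖c p‖ ^ 2 * supportSquare.indicator 1 (z - latticePoint p) :=
        integral_mono_of_nonneg (Filter.Eventually.of_forall fun _ => sq_nonneg _)
          ((integrable_finsetSum s hint).const_mul 4)
          (Filter.Eventually.of_forall (norm_sum_tT_sq_le hφ s c))
    _ = 16 * ∑ p ∈ s, ‖c p‖ ^ 2 := by
        rw [integral_const_mul, integral_finsetSum s hint]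
        simp only [integral_const_mul, integral_indicator_supportSquare_sub, Finset.mul_sum]
        exact Finset.sum_congr rfl fun _ _ => by ring

lemma integrable_norm_sum_tT_sq (hmeas : Measurable φ)
    (hφ : ∀ w, ‖φ w‖ ≤ supportSquare.indicator 1 w) (s : Finset (ℤ × ℤ)) (c : ℤ × ℤ → ℂ) :
    Integrable fun z => ‖∑ p ∈ s, c p * tT p.1 p.2 φ z‖ ^ 2 := by
  have hmeas_sum : Measurable fun z => ∑ p ∈ s, c p * tT p.1 p.2 φ z := by
    unfold tT
    fun_prop
  refine Integrable.mono' ((integrable_finsetSum s fun p _ =>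
      (integrable_indicator_supportSquare_sub p).const_mul (‖c p‖ ^ 2)).const_mul 4)
    (hmeas_sum.norm.pow_const 2).aestronglyMeasurable (Filter.Eventually.of_forall fun z => ?_)
  rw [Real.norm_of_nonneg (sq_nonneg _)]
  exact norm_sum_tT_sq_le hφ s c z

end UpperRieszBound

noncomputable def neighbours : Finset (ℤ × ℤ) := Finset.Icc (-1) 1 ×ˢ Finset.Icc (-1) 1

lemma card_neighbours : neighbours.card = 9 := rfl

lemma sum_sum_erase_mul_boole_neighbours_le (s : Finset (ℤ × ℤ)) (x : ℤ × ℤ → ℝ)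
    (hx : ∀ p, 0 ≤ x p) :
    ∑ m ∈ s, ∑ p ∈ s.erase m, x p * (if m - p ∈ neighbours then 1 else 0) ≤
      9 * ∑ p ∈ s, x p :=
  calc ∑ m ∈ s, ∑ p ∈ s.erase m, x p * (if m - p ∈ neighbours then 1 else 0)
      ≤ ∑ m ∈ s, ∑ p ∈ s, x p * (if m - p ∈ neighbours then 1 else 0) :=
        Finset.sum_le_sum fun m _ => Finset.sum_le_sum_of_subset_of_nonneg
          (Finset.erase_subset _ _) fun p _ _ => mul_nonneg (hx p) (by split_ifs <;> norm_num)
    _ = ∑ p ∈ s, x p * ∑ m ∈ s, (if m - p ∈ neighbours then 1 else 0) := by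
        rw [Finset.sum_comm]
        simp only [Finset.mul_sum]
    _ ≤ ∑ p ∈ s, x p * 9 := Finset.sum_le_sum fun p _ =>
        mul_le_mul_of_nonneg_left ((sum_boole_sub_const_mem_le_card s _ p).trans
          (by rw [card_neighbours]; norm_num)) (hx p)
    _ = 9 * ∑ p ∈ s, x p := by rw [← Finset.sum_mul, mul_comm]

lemma sub_mem_Icc_of_sub_mem_Ico {t : ℝ} {m p : ℤ} (hm : |t - (m + 1)| < 1)
    (hp : t - p ∈ Ico (0 : ℝ) 2) : m - p ∈ Finset.Icc (-1 : ℤ) 1 := by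
  obtain ⟨hm₁, hm₂⟩ := abs_lt.1 hm
  have hlo : (-2 : ℝ) < ((m - p : ℤ) : ℝ) := by push_cast; linarith [hp.1]
  have hhi : ((m - p : ℤ) : ℝ) < 2 := by push_cast; linarith [hp.2]
  have hlo' : -2 < m - p := by exact_mod_cast hlo
  have hhi' : m - p < 2 := by exact_mod_cast hhi
  rw [Finset.mem_Icc]
  omega

lemma one_le_dist_latticePoint {m m' : ℤ × ℤ} (h : m ≠ m') :
    1 ≤ dist (latticePoint m) (latticePoint m') := by
  rw [Prod.dist_eq]
  obtain h₁ | h₂ : m.1 ≠ m'.1 ∨ m.2 ≠ m'.2 := by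
    by_contra! h'
    exact h (Prod.ext h'.1 h'.2)
  · refine le_max_of_le_left ?_
    rw [latticePoint, latticePoint, Int.dist_cast_real, Int.dist_eq]
    exact_mod_cast Int.one_le_abs (sub_ne_zero.2 h₁)
  · refine le_max_of_le_right ?_
    rw [latticePoint, latticePoint, Int.dist_cast_real, Int.dist_eq]
    exact_mod_cast Int.one_le_abs (sub_ne_zero.2 h₂)

lemma volume_real_ball_prod {c : ℝ × ℝ} {δ : ℝ} (hδ : 0 ≤ δ) :
    volume.real (ball c δ) = (2 * δ) ^ 2 := by
  rw [← ball_prod_same, Measure.volume_eq_prod, measureReal_prod_prod, Real.volume_real_ball hδ,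
    Real.volume_real_ball hδ, sq]

lemma mem_ball_sub_latticePoint {z : ℝ × ℝ} {m p : ℤ × ℤ} {δ : ℝ}
    (hz : z ∈ ball (latticePoint m + (1, 1)) δ) :
    z - latticePoint p ∈ ball (latticePoint (m - p) + (1, 1)) δ := by
  rwa [mem_ball, latticePoint_sub, sub_add_eq_add_sub, dist_sub_right, ← mem_ball]

section LowerRieszBound

variable {φ : ℝ × ℝ → ℂ} (hφ : ∀ w, ‖φ w‖ ≤ supportSquare.indicator 1 w) {a b δ : ℝ}
  (hδ : δ ≤ 1 / 2) (hpeak : ∀ w ∈ ball (1, 1) δ, a ≤ ‖φ w‖)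
  (hedge : ∀ k : ℤ × ℤ, k ≠ 0 → ∀ w ∈ ball (latticePoint k + (1, 1)) δ, ‖φ w‖ ≤ b)
include hφ

lemma sub_mem_neighbours {m p : ℤ × ℤ} {z : ℝ × ℝ} (hz : z ∈ ball (latticePoint m + (1, 1)) 1)
    (hp : φ (z - latticePoint p) ≠ 0) : m - p ∈ neighbours := by
  have hsupp : z - latticePoint p ∈ supportSquare := by
    by_contra h
    have := hφ (z - latticePoint p)
    rw [indicator_of_notMem h] at this
    exact hp (norm_le_zero_iff.1 this)
  obtain ⟨h₁, h₂⟩ := mem_ball_iff_abs_sub_lt.1 hz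
  exact Finset.mem_product.2 ⟨sub_mem_Icc_of_sub_mem_Ico h₁ hsupp.1,
    sub_mem_Icc_of_sub_mem_Ico h₂ hsupp.2⟩

include hδ hedge

lemma norm_sub_latticePoint_le {m p : ℤ × ℤ} (hpm : p ≠ m) {z : ℝ × ℝ}
    (hz : z ∈ ball (latticePoint m + (1, 1)) δ) :
    ‖φ (z - latticePoint p)‖ ≤ b * if m - p ∈ neighbours then 1 else 0 := by
  split_ifs with h
  · rw [mul_one]
    exact hedge _ (sub_ne_zero.2 hpm.symm) _ (mem_ball_sub_latticePoint hz)
  · rw [mul_zero, norm_le_zero_iff]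
    by_contra hp
    exact h (sub_mem_neighbours hφ (ball_subset_ball (by linarith) hz) hp)

include hpeak

lemma sub_le_norm_sum_tT {s : Finset (ℤ × ℤ)} (c : ℤ × ℤ → ℂ) {m : ℤ × ℤ} (hm : m ∈ s)
    {z : ℝ × ℝ} (hz : z ∈ ball (latticePoint m + (1, 1)) δ) :
    a * ‖c m‖ - b * ∑ p ∈ s.erase m, ‖c p‖ * (if m - p ∈ neighbours then 1 else 0) ≤
      ‖∑ p ∈ s, c p * tT p.1 p.2 φ z‖ := by
  have hcenter : a * ‖c m‖ ≤ ‖c m * tT m.1 m.2 φ z‖ := by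
    rw [norm_mul, norm_tT, mul_comm]
    refine mul_le_mul_of_nonneg_left (hpeak _ ?_) (norm_nonneg _)
    simpa [latticePoint] using mem_ball_sub_latticePoint (p := m) hz
  have htail : ‖∑ p ∈ s.erase m, c p * tT p.1 p.2 φ z‖ ≤
      b * ∑ p ∈ s.erase m, ‖c p‖ * (if m - p ∈ neighbours then 1 else 0) := by
    rw [Finset.mul_sum]
    refine (norm_sum_le _ _).trans (Finset.sum_le_sum fun p hp => ?_)
    rw [norm_mul, norm_tT, mul_left_comm]
    exact mul_le_mul_of_nonneg_left
      (norm_sub_latticePoint_le hφ hδ hedge (Finset.ne_of_mem_erase hp) hz) (norm_nonneg _)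
  rw [← Finset.add_sum_erase s _ hm]
  linarith [norm_sub_le_norm_add (c m * tT m.1 m.2 φ z) (∑ p ∈ s.erase m, c p * tT p.1 p.2 φ z)]

lemma sq_sub_le_norm_sum_tT_sq (ha : 0 ≤ a) {s : Finset (ℤ × ℤ)} (c : ℤ × ℤ → ℂ) {m : ℤ × ℤ}
    (hm : m ∈ s) {z : ℝ × ℝ} (hz : z ∈ ball (latticePoint m + (1, 1)) δ) :
    a ^ 2 * ‖c m‖ ^ 2 / 2 -
        9 * b ^ 2 * ∑ p ∈ s.erase m, ‖c p‖ ^ 2 * (if m - p ∈ neighbours then 1 else 0) ≤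
      ‖∑ p ∈ s, c p * tT p.1 p.2 φ z‖ ^ 2 := by
  have hcs : (∑ p ∈ s.erase m, ‖c p‖ * (if m - p ∈ neighbours then 1 else 0)) ^ 2 ≤
      9 * ∑ p ∈ s.erase m, ‖c p‖ ^ 2 * (if m - p ∈ neighbours then 1 else 0) :=
    sq_sum_mul_le_of_sum_le (fun p _ => by split_ifs <;> norm_num)
      ((sum_boole_const_sub_mem_le_card _ _ m).trans (by rw [card_neighbours]; norm_num))
  have hsq := half_sq_sub_sq_le_sq (mul_nonneg ha (norm_nonneg (c m))) (norm_nonneg _)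
    (sub_le_norm_sum_tT hφ hδ hpeak hedge c hm hz)
  nlinarith [mul_le_mul_of_nonneg_left hcs (sq_nonneg b)]

theorem le_integral_norm_sum_tT_sq (hmeas : Measurable φ) (ha : 0 ≤ a) (hδ₀ : 0 ≤ δ)
    (s : Finset (ℤ × ℤ)) (c : ℤ × ℤ → ℂ) :
    (2 * δ) ^ 2 * (a ^ 2 / 2 - 81 * b ^ 2) * ∑ p ∈ s, ‖c p‖ ^ 2 ≤
      ∫ z, ‖∑ p ∈ s, c p * tT p.1 p.2 φ z‖ ^ 2 := by
  set w : ℤ × ℤ → ℤ × ℤ → ℝ := fun m p => if m - p ∈ neighbours then 1 else 0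
  have hint := integrable_norm_sum_tT_sq hmeas hφ s c
  have hball : ∀ m ∈ s, (2 * δ) ^ 2 * (a ^ 2 * ‖c m‖ ^ 2 / 2 -
      9 * b ^ 2 * ∑ p ∈ s.erase m, ‖c p‖ ^ 2 * w m p) ≤
      ∫ z in ball (latticePoint m + (1, 1)) δ, ‖∑ p ∈ s, c p * tT p.1 p.2 φ z‖ ^ 2 := by
    intro m hm
    have := setIntegral_ge_of_const_le measurableSet_ball measure_ball_lt_top.ne
      (fun z hz => sq_sub_le_norm_sum_tT_sq hφ hδ hpeak hedge ha c hm hz) hint.integrableOn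
    rwa [volume_real_ball_prod hδ₀, smul_eq_mul] at this
  have hdisj : (s : Set (ℤ × ℤ)).Pairwise
      (Function.onFun Disjoint fun m => ball (latticePoint m + (1, 1)) δ) :=
    fun m _ m' _ hmm' => ball_disjoint_ball <| by
      rw [dist_add_right]; linarith [one_le_dist_latticePoint hmm']
  have hcount := sum_sum_erase_mul_boole_neighbours_le s (fun p => ‖c p‖ ^ 2)
    fun p => sq_nonneg _
  calc (2 * δ) ^ 2 * (a ^ 2 / 2 - 81 * b ^ 2) * ∑ p ∈ s, ‖c p‖ ^ 2
      ≤ ∑ m ∈ s, (2 * δ) ^ 2 * (a ^ 2 * ‖c m‖ ^ 2 / 2 -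
          9 * b ^ 2 * ∑ p ∈ s.erase m, ‖c p‖ ^ 2 * w m p) := by
        rw [← Finset.mul_sum, Finset.sum_sub_distrib, ← Finset.mul_sum, ← Finset.sum_div,
          ← Finset.mul_sum, mul_assoc]
        gcongr
        nlinarith [mul_le_mul_of_nonneg_left hcount (sq_nonneg b)]
    _ ≤ ∑ m ∈ s, ∫ z in ball (latticePoint m + (1, 1)) δ, ‖∑ p ∈ s, c p * tT p.1 p.2 φ z‖ ^ 2 :=
        Finset.sum_le_sum hball
    _ ≤ ∫ z, ‖∑ p ∈ s, c p * tT p.1 p.2 φ z‖ ^ 2 :=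
        sum_setIntegral_le_integral s (fun _ => measurableSet_ball) hdisj hint
          fun _ => sq_nonneg _

end LowerRieszBound

noncomputable def unitIndicator : ℝ → ℂ := (Ico (0 : ℝ) 1).indicator 1

lemma phi1_apply_s14 (x y : ℝ) : phi1 (x, y) = unitIndicator x * unitIndicator y := by
  simp only [phi1, unitIndicator, indicator_apply, Pi.one_apply]
  split_ifs <;> simp_all

lemma conj_unitIndicator (t : ℝ) : conj (unitIndicator t) = unitIndicator t := by
  simp only [unitIndicator, indicator_apply, Pi.one_apply]
  split_ifs <;> simp

lemma unitIndicator_sub (x u : ℝ) : unitIndicator (x - u) = (Ioc (x - 1) x).indicator 1 u := by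
  simp only [unitIndicator, indicator_apply, Set.sub_mem_Ico_iff_right, sub_zero, Pi.one_apply]

/-- At `y = 0` this is the tent function `max (1 - |x - 1|) 0 = (χ * χ)(x)`, `χ = 1_{[0,1)}`. -/
noncomputable def twistedTent (x y : ℝ) : ℂ :=
  ∫ u, unitIndicator (x - u) * unitIndicator u * cexp (↑(π * u * y) * I)

lemma phiN_two_apply (w : ℝ × ℝ) :
    phiN 2 w = twistedTent w.1 w.2 * conj (twistedTent w.2 w.1) := by
  set f : ℝ → ℂ := fun u => unitIndicator (w.1 - u) * unitIndicator u * cexp (↑(π * u * w.2) * I)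
  set g : ℝ → ℂ := fun v => unitIndicator (w.2 - v) * unitIndicator v * cexp (↑(π * v * w.1) * I)
  have hfactor : ∀ q : ℝ × ℝ, phi1 (w.1 - q.1, w.2 - q.2) * phi1 q *
      cexp (π * I * ((q.1 : ℂ) * w.2 - (q.2 : ℂ) * w.1)) = f q.1 * conj (g q.2) := by
    rintro ⟨u, v⟩
    have hexp : cexp (π * I * ((u : ℂ) * w.2 - (v : ℂ) * w.1)) =
        cexp (↑(π * u * w.2) * I) * cexp (conj (↑(π * v * w.1) * I)) := by
      rw [← Complex.exp_add, map_mul, conj_ofReal, conj_I]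
      congr 1
      push_cast
      ring
    simp only [f, g, phi1_apply_s14, map_mul, conj_unitIndicator, ← Complex.exp_conj, hexp]
    ring
  rw [show phiN 2 = tConv phi1 phi1 from rfl, tConv, integral_congr_ae (ae_of_all _ hfactor),
    Measure.volume_eq_prod, integral_prod_mul f (fun v => conj (g v)), integral_conj]
  rfl

lemma min_sub_max_eq_one_sub_abs (x : ℝ) : min x 1 - max (x - 1) 0 = 1 - |x - 1| := by
  rcases le_total x 1 with h | h
  · rw [min_eq_left h, max_eq_right (by linarith), abs_of_nonpos (by linarith)]
    ring
  · rw [min_eq_right h, max_eq_left (by linarith), abs_of_nonneg (by linarith)]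

lemma twistedTent_eq_setIntegral (x y : ℝ) :
    twistedTent x y = ∫ u in Ioc (max (x - 1) 0) (min x 1), cexp (↑(π * u * y) * I) := by
  have hind : ∀ u, unitIndicator (x - u) * unitIndicator u * cexp (↑(π * u * y) * I) =
      (Ioc (x - 1) x ∩ Ico 0 1).indicator (fun u => cexp (↑(π * u * y) * I)) u := by
    intro u
    rw [unitIndicator_sub]
    simp only [unitIndicator, indicator_apply, mem_inter_iff, Pi.one_apply]
    split_ifs <;> simp_all
  rw [twistedTent, funext hind, integral_indicator (measurableSet_Ioc.inter measurableSet_Ico),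
    setIntegral_congr_set ((Filter.EventuallyEq.refl _ _).inter Ico_ae_eq_Ioc), Ioc_inter_Ioc]

lemma norm_twistedTent_le (x y : ℝ) : ‖twistedTent x y‖ ≤ max (1 - |x - 1|) 0 := by
  rw [twistedTent_eq_setIntegral]
  calc _ ≤ 1 * volume.real (Ioc (max (x - 1) 0) (min x 1)) :=
        norm_setIntegral_le_of_norm_le_const measure_Ioc_lt_top
          fun u _ => (norm_exp_ofReal_mul_I _).le
    _ = max (1 - |x - 1|) 0 := by
        rw [one_mul, Real.volume_real_Ioc, min_sub_max_eq_one_sub_abs]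

lemma norm_twistedTent_le_one (x y : ℝ) : ‖twistedTent x y‖ ≤ 1 :=
  (norm_twistedTent_le x y).trans (max_le (by linarith [abs_nonneg (x - 1)]) zero_le_one)

lemma twistedTent_eq_zero {x : ℝ} (hx : x ∉ Ico 0 2) (y : ℝ) : twistedTent x y = 0 := by
  have h : 1 ≤ |x - 1| := by
    rw [mem_Ico, not_and_or, not_le, not_lt] at hx
    rw [le_abs]
    rcases hx with hx | hx
    · right; linarith
    · left; linarith
  exact norm_le_zero_iff.1 ((norm_twistedTent_le x y).trans (max_le (by linarith) le_rfl))

lemma norm_twistedTent_le_of_abs_sub_lt {x δ : ℝ} {k : ℤ} (hk : k ≠ 0) (hx : |x - (k + 1)| < δ)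
    (y : ℝ) : ‖twistedTent x y‖ ≤ δ := by
  have hk₁ : (1 : ℝ) ≤ |(k : ℝ)| := by exact_mod_cast Int.one_le_abs hk
  have htri := abs_sub (x - 1) (x - (k + 1))
  rw [show x - 1 - (x - (k + 1)) = (k : ℝ) by ring] at htri
  exact (norm_twistedTent_le x y).trans
    (max_le (by linarith) ((abs_nonneg _).trans hx.le))

lemma norm_exp_ofReal_mul_I_sub_le (θ θ' : ℝ) :
    ‖cexp (θ * I) - cexp (θ' * I)‖ ≤ |θ - θ'| := by
  have : cexp (θ * I) - cexp (θ' * I) = cexp (θ' * I) * (cexp (I * ↑(θ - θ')) - 1) := by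
    rw [mul_sub, mul_one, ← Complex.exp_add]
    congr 2
    push_cast
    ring
  rw [this, norm_mul, norm_exp_ofReal_mul_I, one_mul, ← Real.norm_eq_abs]
  exact Real.norm_exp_I_mul_ofReal_sub_one_le

lemma norm_integral_exp_pi_mul_I : ‖∫ u in (0 : ℝ)..1, cexp (↑(π * u) * I)‖ = 2 / π := by
  have hc : (π : ℂ) * I ≠ 0 := mul_ne_zero (ofReal_ne_zero.2 pi_ne_zero) I_ne_zero
  have h : ∀ u : ℝ, cexp (↑(π * u) * I) = cexp (π * I * u) := fun u => by push_cast; ring_nf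
  simp_rw [h]
  rw [integral_exp_mul_complex hc]
  simp [exp_pi_mul_I, abs_of_pos pi_pos]
  norm_num

lemma norm_integral_exp_sub_integral_exp_le (y : ℝ) :
    ‖(∫ u in (0 : ℝ)..1, cexp (↑(π * u * y) * I)) - ∫ u in (0 : ℝ)..1, cexp (↑(π * u) * I)‖ ≤
      π * |y - 1| := by
  rw [← intervalIntegral.integral_sub ((by fun_prop : Continuous fun u : ℝ =>
      cexp (↑(π * u * y) * I)).intervalIntegrable 0 1)
    ((by fun_prop : Continuous fun u : ℝ => cexp (↑(π * u) * I)).intervalIntegrable 0 1)]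
  refine (intervalIntegral.norm_integral_le_of_norm_le_const fun u hu => ?_).trans
    (by rw [sub_zero, abs_one, mul_one])
  rw [uIoc_of_le zero_le_one] at hu
  refine (norm_exp_ofReal_mul_I_sub_le _ _).trans ?_
  rw [show π * u * y - π * u = π * u * (y - 1) by ring, abs_mul,
    abs_of_nonneg (by nlinarith [pi_pos, hu.1])]
  exact mul_le_mul_of_nonneg_right (by nlinarith [pi_pos, hu.2]) (abs_nonneg _)

lemma le_norm_twistedTent {x : ℝ} (hx : |x - 1| ≤ 1) (y : ℝ) :
    2 / π - π * |y - 1| - 2 * |x - 1| ≤ ‖twistedTent x y‖ := by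
  have hperturb := norm_integral_exp_sub_integral_exp_le y
  set f : ℝ → ℂ := fun u => cexp (↑(π * u * y) * I)
  have hf : Continuous f := by fun_prop
  have hf_norm : ∀ u, ‖f u‖ ≤ 1 := fun u => (norm_exp_ofReal_mul_I _).le
  set α := max (x - 1) 0
  set β := min x 1
  have hαβ : α ≤ β := by
    have := min_sub_max_eq_one_sub_abs x
    linarith
  have hsplit : ∫ u in α..β, f u = (∫ u in 0..1, f u) - (∫ u in 0..α, f u) - ∫ u in β..1, f u := by
    rw [← intervalIntegral.integral_add_adjacent_intervals (hf.intervalIntegrable 0 α)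
        (hf.intervalIntegrable α 1),
      ← intervalIntegral.integral_add_adjacent_intervals (hf.intervalIntegrable α β)
        (hf.intervalIntegrable β 1)]
    ring
  have hleft : ‖∫ u in 0..α, f u‖ ≤ |x - 1| := by
    refine (intervalIntegral.norm_integral_le_of_norm_le_const fun u _ => hf_norm u).trans ?_
    rw [one_mul, sub_zero, abs_of_nonneg (le_max_right _ _)]
    exact max_le (le_abs_self _) (abs_nonneg _)
  have hright : ‖∫ u in β..1, f u‖ ≤ |x - 1| := by
    refine (intervalIntegral.norm_integral_le_of_norm_le_const fun u _ => hf_norm u).trans ?_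
    rw [one_mul, abs_le]
    constructor <;> cases min_cases x 1 <;> cases abs_cases (x - 1) <;> linarith
  have hcenter := norm_sub_norm_le (∫ u in (0 : ℝ)..1, cexp (↑(π * u) * I)) (∫ u in 0..1, f u)
  rw [norm_integral_exp_pi_mul_I, norm_sub_rev] at hcenter
  rw [twistedTent_eq_setIntegral, ← intervalIntegral.integral_of_le hαβ, hsplit]
  linarith [norm_sub_norm_le ((∫ u in 0..1, f u) - ∫ u in 0..α, f u) (∫ u in β..1, f u),
    norm_sub_norm_le (∫ u in 0..1, f u) (∫ u in 0..α, f u)]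

lemma norm_phiN_two_apply (w : ℝ × ℝ) :
    ‖phiN 2 w‖ = ‖twistedTent w.1 w.2‖ * ‖twistedTent w.2 w.1‖ := by
  rw [phiN_two_apply, norm_mul, Complex.norm_conj]

lemma norm_phiN_two_le_indicator (w : ℝ × ℝ) : ‖phiN 2 w‖ ≤ supportSquare.indicator 1 w := by
  rw [norm_phiN_two_apply]
  by_cases hw : w ∈ supportSquare
  · rw [indicator_of_mem hw, Pi.one_apply]
    exact mul_le_one₀ (norm_twistedTent_le_one _ _) (norm_nonneg _) (norm_twistedTent_le_one _ _)
  · rw [indicator_of_notMem hw]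
    rcases not_and_or.1 hw with h | h
    · rw [twistedTent_eq_zero h, norm_zero, zero_mul]
    · rw [twistedTent_eq_zero h, norm_zero, mul_zero]

lemma quarter_le_norm_phiN_two {w : ℝ × ℝ} (hw : w ∈ ball (1, 1) (1 / 100)) :
    1 / 4 ≤ ‖phiN 2 w‖ := by
  have hhalf : ∀ x y : ℝ, |x - 1| < 1 / 100 → |y - 1| < 1 / 100 →
      1 / 2 ≤ ‖twistedTent x y‖ := by
    intro x y hx hy
    have hlow := le_norm_twistedTent (hx.le.trans (by norm_num)) y
    have hpi : 2 / 3.15 ≤ 2 / π := div_le_div_of_nonneg_left (by norm_num) pi_pos pi_lt_d2.le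
    nlinarith [pi_lt_d2, abs_nonneg (y - 1)]
  obtain ⟨h₁, h₂⟩ := mem_ball_iff_abs_sub_lt.1 hw
  rw [norm_phiN_two_apply]
  nlinarith [hhalf _ _ h₁ h₂, hhalf _ _ h₂ h₁]

lemma norm_phiN_two_le_of_mem_ball {k : ℤ × ℤ} (hk : k ≠ 0) {w : ℝ × ℝ}
    (hw : w ∈ ball (latticePoint k + (1, 1)) (1 / 100)) : ‖phiN 2 w‖ ≤ 1 / 100 := by
  obtain ⟨h₁, h₂⟩ := mem_ball_iff_abs_sub_lt.1 hw
  rw [norm_phiN_two_apply]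
  rcases not_and_or.1 (mt Prod.ext_iff.2 hk) with hk₁ | hk₂
  · calc _ ≤ 1 / 100 * 1 :=
          mul_le_mul (norm_twistedTent_le_of_abs_sub_lt hk₁ h₁ _) (norm_twistedTent_le_one _ _)
            (norm_nonneg _) (by norm_num)
      _ = 1 / 100 := mul_one _
  · calc _ ≤ 1 * (1 / 100) :=
          mul_le_mul (norm_twistedTent_le_one _ _) (norm_twistedTent_le_of_abs_sub_lt hk₂ h₂ _)
            (norm_nonneg _) zero_le_one
      _ = 1 / 100 := one_mul _

lemma measurable_phi1 : Measurable phi1 :=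
  Measurable.ite ((measurableSet_Ico.preimage measurable_fst).inter
    (measurableSet_Ico.preimage measurable_snd)) measurable_const measurable_const

lemma measurable_phiN_two : Measurable (phiN 2) := by
  have hF : StronglyMeasurable fun z : (ℝ × ℝ) × (ℝ × ℝ) =>
      phi1 (z.1.1 - z.2.1, z.1.2 - z.2.2) * phi1 z.2 *
        cexp (π * I * ((z.2.1 : ℂ) * z.1.2 - (z.2.2 : ℂ) * z.1.1)) :=
    ((measurable_phi1.comp (by fun_prop)).mul (measurable_phi1.comp measurable_snd)
      |>.mul (by fun_prop)).stronglyMeasurable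
  exact hF.integral_prod_right'.measurable

theorem phi2_riesz_sequence :
    ∃ A B : ℝ, 0 < A ∧ 0 < B ∧
      ∀ (s : Finset (ℤ × ℤ)) (c : ℤ × ℤ → ℂ),
        A * ∑ p ∈ s, ‖c p‖ ^ 2 ≤
            (∫ z : ℝ × ℝ, ‖∑ p ∈ s, c p * tT p.1 p.2 (phiN 2) z‖ ^ 2) ∧
        (∫ z : ℝ × ℝ, ‖∑ p ∈ s, c p * tT p.1 p.2 (phiN 2) z‖ ^ 2) ≤
          B * ∑ p ∈ s, ‖c p‖ ^ 2 := by
  refine ⟨(2 * (1 / 100)) ^ 2 * ((1 / 4) ^ 2 / 2 - 81 * (1 / 100) ^ 2), 16, by norm_num,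
    by norm_num, fun s c => ⟨?_, integral_norm_sum_tT_sq_le norm_phiN_two_le_indicator s c⟩⟩
  exact le_integral_norm_sum_tT_sq norm_phiN_two_le_indicator (by norm_num)
    (fun _ => quarter_le_norm_phiN_two) (fun _ hk _ => norm_phiN_two_le_of_mem_ball hk)
    measurable_phiN_two (by norm_num) (by norm_num) s c
end
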